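/- Let Δ and Δ' = Δ + E be self-adjoint N×N complex matrices with ‖E‖ < 1, where ‖·‖ is the operator norm. Let L be a natural number and c_1, …, c_L ∈ ℂ, and define the filter G(Δ) := Σ_{l=1}^{L} c_l · C(Δ)^l, where C(Δ) := (Δ − iI)(Δ + iI)^{-1} is the Cayley transform. Then ‖G(Δ) − G(Δ')‖ ≤ (Σ_{l=1}^{L} l·|c_l|) · ( (‖Δ‖ + 1)·‖E‖/(1 − ‖E‖) + ‖E‖ ). -/

import Mathlib

/-! The Cayley transform of a self-adjoint element of a C⋆-algebra is unitary, hence a contraction,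
and `1 - C(a) = 2i (a + i)⁻¹` then gives `‖(a + i)⁻¹‖ ≤ 1`. With the resolvent identity this makes
the Cayley transform `2`-Lipschitz on self-adjoint elements, and telescoping `x ^ l - y ^ l` between
contractions gives `‖x ^ l - y ^ l‖ ≤ l ‖x - y‖`. Together they bound the difference of the filters
by `2 ‖E‖ ∑ l |c_l|`, which is at most the stated bound since `‖E‖ ≤ ‖E‖ / (1 - ‖E‖)`. -/

open scoped Matrix.Norms.L2Operator

/-- The Cayley transform of a matrix: `C(Δ) = (Δ - i I) (Δ + i I)⁻¹`. -/
noncomputable def cayleyTransform {N : ℕ} (Δ : Matrix (Fin N) (Fin N) ℂ) :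
    Matrix (Fin N) (Fin N) ℂ :=
  (Δ - Complex.I • 1) * (Δ + Complex.I • 1)⁻¹

open Complex
open scoped Ring

section PowerDifference

variable {R : Type*} [SeminormedRing R] {a b : R}

theorem norm_mul_pow_le_of_norm_le_one (hb : ‖b‖ ≤ 1) (x : R) (n : ℕ) : ‖x * b ^ n‖ ≤ ‖x‖ := by
  induction n with
  | zero => simp
  | succ n ih =>
    calc ‖x * b ^ (n + 1)‖ = ‖x * b ^ n * b‖ := by rw [pow_succ, mul_assoc]
      _ ≤ ‖x * b ^ n‖ * ‖b‖ := norm_mul_le _ _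
      _ ≤ ‖x * b ^ n‖ := mul_le_of_le_one_right (norm_nonneg _) hb
      _ ≤ ‖x‖ := ih

theorem norm_pow_sub_pow_le_of_norm_le_one (ha : ‖a‖ ≤ 1) (hb : ‖b‖ ≤ 1) (n : ℕ) :
    ‖a ^ n - b ^ n‖ ≤ n * ‖a - b‖ := by
  induction n with
  | zero => simp
  | succ n ih =>
    calc ‖a ^ (n + 1) - b ^ (n + 1)‖ = ‖a * (a ^ n - b ^ n) + (a - b) * b ^ n‖ := by
          rw [pow_succ', pow_succ']; noncomm_ring
      _ ≤ ‖a‖ * ‖a ^ n - b ^ n‖ + ‖a - b‖ :=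
          norm_add_le_of_le (norm_mul_le _ _) (norm_mul_pow_le_of_norm_le_one hb _ _)
      _ ≤ n * ‖a - b‖ + ‖a - b‖ := by
          linarith [mul_le_of_le_one_left (norm_nonneg (a ^ n - b ^ n)) ha]
      _ = (n + 1 : ℕ) * ‖a - b‖ := by push_cast; ring

theorem norm_sum_smul_pow_sub_sum_smul_pow_le {𝕜 : Type*} [NormedField 𝕜] [NormedSpace 𝕜 R]
    (ha : ‖a‖ ≤ 1) (hb : ‖b‖ ≤ 1) (s : Finset ℕ) (c : ℕ → 𝕜) :
    ‖(∑ l ∈ s, c l • a ^ l) - ∑ l ∈ s, c l • b ^ l‖ ≤ (∑ l ∈ s, (l : ℝ) * ‖c l‖) * ‖a - b‖ := by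
  rw [← Finset.sum_sub_distrib, Finset.sum_mul]
  refine (norm_sum_le _ _).trans (Finset.sum_le_sum fun l _ => ?_)
  calc ‖c l • a ^ l - c l • b ^ l‖ ≤ ‖c l‖ * ‖a ^ l - b ^ l‖ := by
        rw [← smul_sub]; exact norm_smul_le _ _
    _ ≤ ‖c l‖ * (l * ‖a - b‖) := by gcongr; exact norm_pow_sub_pow_le_of_norm_le_one ha hb l
    _ = l * ‖c l‖ * ‖a - b‖ := by ring

end PowerDifference

theorem CStarRing.norm_le_one_of_mem_unitary {E : Type*} [NormedRing E] [StarRing E]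
    [CStarRing E] {u : E} (hu : u ∈ unitary E) : ‖u‖ ≤ 1 := by
  obtain _ | _ := subsingleton_or_nontrivial E
  · simp [Subsingleton.elim u 0]
  · exact (CStarRing.norm_of_mem_unitary hu).le

section Cayley

variable {A : Type*} [CStarAlgebra A] {a b : A}

noncomputable def cayley (a : A) : A :=
  (a - I • 1) * (a + I • 1)⁻¹ʳ

namespace IsSelfAdjoint

theorem isUnit_add_I_smul_one (ha : IsSelfAdjoint a) : IsUnit (a + I • 1) := by
  have h : -I ∉ spectrum ℂ a := fun hmem => by
    simpa [Complex.ext_iff] using ha.mem_spectrum_eq_re hmem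
  have := (spectrum.notMem_iff.mp h).neg
  rwa [Algebra.algebraMap_eq_smul_one, neg_sub, neg_smul, sub_neg_eq_add] at this

theorem star_add_I_smul_one (ha : IsSelfAdjoint a) : star (a + I • 1) = a - I • 1 := by
  rw [star_add, ha.star_eq, star_smul, star_one, star_def, conj_I, neg_smul, sub_eq_add_neg]

theorem cayley_mem_unitary (ha : IsSelfAdjoint a) : cayley a ∈ unitary A := by
  set u := a + I • 1
  have hu : IsUnit u := ha.isUnit_add_I_smul_one
  have hstar : star u = a - I • 1 := ha.star_add_I_smul_one
  have hcomm : Commute u (star u) := by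
    rw [hstar]
    exact ((Commute.refl a).add_left ((Commute.one_right a).smul_right I).symm).sub_right
      (((Commute.one_right a).smul_right I).add_left ((Commute.one_left _).smul_left I))
  have hcayley : cayley a = star u * u⁻¹ʳ := by rw [cayley, hstar]
  have hcayley_star : star (cayley a) = (star u)⁻¹ʳ * u := by
    rw [hcayley, star_mul, star_star, Ring.inverse_star]
  rw [Unitary.mem_iff, hcayley_star, hcayley]
  constructor
  · calc (star u)⁻¹ʳ * u * (star u * u⁻¹ʳ) = (star u)⁻¹ʳ * (star u * u) * u⁻¹ʳ := by
          rw [mul_assoc, ← mul_assoc u, hcomm.eq]; simp only [mul_assoc]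
      _ = 1 := by
          rw [← mul_assoc, Ring.inverse_mul_cancel _ hu.star, one_mul, Ring.mul_inverse_cancel _ hu]
  · calc star u * u⁻¹ʳ * ((star u)⁻¹ʳ * u) = star u * (star u)⁻¹ʳ * (u⁻¹ʳ * u) := by
          rw [mul_assoc, ← mul_assoc u⁻¹ʳ, hcomm.ringInverse_ringInverse.eq]; simp only [mul_assoc]
      _ = 1 := by
          rw [Ring.mul_inverse_cancel _ hu.star, one_mul, Ring.inverse_mul_cancel _ hu]

theorem norm_cayley_le_one (ha : IsSelfAdjoint a) : ‖cayley a‖ ≤ 1 :=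
  CStarRing.norm_le_one_of_mem_unitary ha.cayley_mem_unitary

theorem one_sub_cayley (ha : IsSelfAdjoint a) :
    1 - cayley a = (2 * I) • (a + I • 1)⁻¹ʳ := by
  calc 1 - cayley a = ((a + I • 1) - (a - I • 1)) * (a + I • 1)⁻¹ʳ := by
        rw [sub_mul, Ring.mul_inverse_cancel _ ha.isUnit_add_I_smul_one, cayley]
    _ = (2 * I) • (a + I • 1)⁻¹ʳ := by
        rw [add_sub_sub_cancel, ← add_smul, ← two_mul, smul_one_mul]

/-- Since `cayley a` is a contraction, `‖2 i (a + i)⁻¹‖ = ‖1 - cayley a‖ ≤ 2`. -/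
theorem norm_inverse_add_I_smul_one_le_one (ha : IsSelfAdjoint a) :
    ‖(a + I • 1)⁻¹ʳ‖ ≤ 1 := by
  have h : ‖(1 : A) - cayley a‖ ≤ 1 + 1 := (norm_sub_le _ _).trans <|
    add_le_add (CStarRing.norm_le_one_of_mem_unitary (unitary A).one_mem) ha.norm_cayley_le_one
  rw [ha.one_sub_cayley, norm_smul] at h
  norm_num at h
  linarith

theorem norm_cayley_sub_cayley_le (ha : IsSelfAdjoint a) (hb : IsSelfAdjoint b) :
    ‖cayley a - cayley b‖ ≤ 2 * ‖a - b‖ := by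
  have hdiff : cayley a - cayley b = (2 * I) • ((b + I • 1)⁻¹ʳ * (a - b) * (a + I • 1)⁻¹ʳ) := by
    rw [← sub_sub_sub_cancel_left _ _ 1, hb.one_sub_cayley, ha.one_sub_cayley, ← smul_sub,
      Ring.inverse_sub_inverse (iff_of_true hb.isUnit_add_I_smul_one ha.isUnit_add_I_smul_one),
      add_sub_add_right_eq_sub]
  calc ‖cayley a - cayley b‖ ≤ 2 * (‖(b + I • 1)⁻¹ʳ‖ * ‖a - b‖ * ‖(a + I • 1)⁻¹ʳ‖) := by
        rw [hdiff, norm_smul]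
        simpa using norm_mul₃_le
    _ ≤ 2 * (1 * ‖a - b‖ * 1) := by
        gcongr
        exacts [hb.norm_inverse_add_I_smul_one_le_one, ha.norm_inverse_add_I_smul_one_le_one]
    _ = 2 * ‖a - b‖ := by ring

end IsSelfAdjoint

end Cayley

theorem cayleyTransform_eq_cayley {N : ℕ} (Δ : Matrix (Fin N) (Fin N) ℂ) :
    cayleyTransform Δ = cayley Δ := by
  rw [cayleyTransform, cayley, Matrix.nonsing_inv_eq_ringInverse]

/-- For self-adjoint `Δ` and `Δ' = Δ + E` with `‖E‖ < 1`, and a finite Cayley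
filter `G(Δ) = ∑_{l=1}^L c_l C(Δ)^l`, one has
`‖G(Δ) - G(Δ')‖ ≤ (∑_{l=1}^L l |c_l|) ((‖Δ‖ + 1) ‖E‖ / (1 - ‖E‖) + ‖E‖)`. -/
theorem norm_cayley_filter_diff_le {N : ℕ} (Δ E : Matrix (Fin N) (Fin N) ℂ)
    (hΔ : IsSelfAdjoint Δ) (hΔ' : IsSelfAdjoint (Δ + E)) (hE : ‖E‖ < 1)
    (L : ℕ) (c : ℕ → ℂ) :
    ‖(∑ l ∈ Finset.Icc 1 L, c l • cayleyTransform Δ ^ l) -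
        ∑ l ∈ Finset.Icc 1 L, c l • cayleyTransform (Δ + E) ^ l‖ ≤
      (∑ l ∈ Finset.Icc 1 L, (l : ℝ) * ‖c l‖) *
        ((‖Δ‖ + 1) * (‖E‖ / (1 - ‖E‖)) + ‖E‖) := by
  simp only [cayleyTransform_eq_cayley]
  have hcayley : ‖cayley Δ - cayley (Δ + E)‖ ≤ 2 * ‖E‖ := by
    simpa using hΔ.norm_cayley_sub_cayley_le hΔ'
  have hE_le : ‖E‖ ≤ (‖Δ‖ + 1) * (‖E‖ / (1 - ‖E‖)) := by
    have h1E : 0 < 1 - ‖E‖ := by linarith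
    rw [mul_div_assoc', le_div_iff₀ h1E]
    nlinarith [norm_nonneg E, norm_nonneg Δ]
  refine (norm_sum_smul_pow_sub_sum_smul_pow_le hΔ.norm_cayley_le_one
    hΔ'.norm_cayley_le_one _ c).trans ?_
  gcongr
  linarith
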